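/- arXiv:2605.20475 — 7 statements merged into one kernel-verified Lean document; each statement's English description precedes it below -/
import Mathlib

section
/- If n is a unitary perfect number with 2^a ∥ n (i.e., 2^a ∣ n and 2^{a+1} ∤ n), then a + 1 = ∑_p v_2(p^{e_p} + 1), where the sum ranges over the odd primes p dividing n, e_p denotes the exponent of p in n, and v_2 denotes the 2-adic valuation. -/
/-!
A unitary divisor `d ∥ n` contains each prime power `p ^ v_p(n)` either fully or not at all, so
unitary divisors of `n` correspond to subsets of its prime factors and
`σ*(n) = ∏_{p ∣ n} (p ^ v_p(n) + 1)`. Comparing 2-adic valuations in `σ*(n) = 2n` gives the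
claim: `2n` has valuation `a + 1`, and the factor `2 ^ a + 1`, present when `a > 0`, is odd.
-/

def usigma (n : ℕ) : ℕ := ∑ d ∈ n.divisors.filter (fun d => Nat.Coprime d (n / d)), d

namespace Nat

def unitaryDivisors (n : ℕ) : Finset ℕ := n.divisors.filter fun d => d.Coprime (n / d)

lemma mem_unitaryDivisors {n d : ℕ} :
    d ∈ n.unitaryDivisors ↔ d ∣ n ∧ n ≠ 0 ∧ d.Coprime (n / d) := by
  simp [unitaryDivisors, and_assoc]

lemma factorization_ne_zero_of_mem_primeFactors {n p : ℕ} (hp : p ∈ n.primeFactors) :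
    n.factorization p ≠ 0 :=
  Finsupp.mem_support_iff.1 (n.support_factorization ▸ hp)

lemma primeFactors_prod_pow {S : Finset ℕ} {e : ℕ → ℕ} (hS : ∀ p ∈ S, p.Prime)
    (he : ∀ p ∈ S, e p ≠ 0) : (∏ p ∈ S, p ^ e p).primeFactors = S := by
  induction S using Finset.induction_on with
  | empty => simp
  | insert p S hpS ih =>
    simp only [Finset.mem_insert, forall_eq_or_imp] at hS he
    obtain ⟨hp, hS⟩ := hS
    have hrest : ∏ q ∈ S, q ^ e q ≠ 0 :=
      Finset.prod_ne_zero_iff.2 fun q hq => pow_ne_zero _ (hS q hq).ne_zero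
    rw [Finset.prod_insert hpS, primeFactors_mul (pow_ne_zero _ hp.ne_zero) hrest,
      primeFactors_prime_pow he.1 hp, ih hS he.2, Finset.insert_eq]

lemma primeFactors_prod_pow_factorization {n : ℕ} {S : Finset ℕ} (hS : S ⊆ n.primeFactors) :
    (∏ p ∈ S, p ^ n.factorization p).primeFactors = S :=
  primeFactors_prod_pow (fun _ hp => prime_of_mem_primeFactors (hS hp))
    (fun _ hp => factorization_ne_zero_of_mem_primeFactors (hS hp))

lemma prod_pow_factorization_mem_unitaryDivisors {n : ℕ} (hn : n ≠ 0) {S : Finset ℕ}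
    (hS : S ⊆ n.primeFactors) : ∏ p ∈ S, p ^ n.factorization p ∈ n.unitaryDivisors := by
  set d := ∏ p ∈ S, p ^ n.factorization p
  set m := ∏ p ∈ n.primeFactors \ S, p ^ n.factorization p
  have hdm : d * m = n := by
    rw [← Finset.prod_union Finset.disjoint_sdiff, Finset.union_sdiff_of_subset hS,
      ← prod_primeFactors_pow_factorization hn]
  have hd : d ≠ 0 := left_ne_zero_of_mul (hdm ▸ hn)
  have hm : m ≠ 0 := right_ne_zero_of_mul (hdm ▸ hn)
  have hcop : d.Coprime m := by
    rw [← disjoint_primeFactors hd hm, primeFactors_prod_pow_factorization hS,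
      primeFactors_prod_pow_factorization Finset.sdiff_subset]
    exact Finset.disjoint_sdiff
  refine mem_unitaryDivisors.2 ⟨⟨m, hdm.symm⟩, hn, ?_⟩
  rwa [← hdm, Nat.mul_div_cancel_left m (pos_of_ne_zero hd)]

lemma prod_primeFactors_pow_factorization_of_mem_unitaryDivisors {n d : ℕ}
    (hd : d ∈ n.unitaryDivisors) : ∏ p ∈ d.primeFactors, p ^ n.factorization p = d := by
  obtain ⟨⟨m, rfl⟩, hn, hcop⟩ := mem_unitaryDivisors.1 hd
  have hd0 : d ≠ 0 := left_ne_zero_of_mul hn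
  rw [Nat.mul_div_cancel_left m (pos_of_ne_zero hd0)] at hcop
  conv_rhs => rw [prod_primeFactors_pow_factorization hd0]
  refine Finset.prod_congr rfl fun p hp => ?_
  rw [factorization_eq_of_coprime_left hcop (mem_primeFactors_iff_mem_primeFactorsList.1 hp)]

theorem usigma_eq_prod_primeFactors {n : ℕ} (hn : n ≠ 0) :
    usigma n = ∏ p ∈ n.primeFactors, (p ^ n.factorization p + 1) := by
  rw [Finset.prod_add]
  simp only [Finset.prod_const_one, mul_one]
  exact (Finset.sum_nbij' (fun S => ∏ p ∈ S, p ^ n.factorization p) primeFactors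
    (fun S hS => prod_pow_factorization_mem_unitaryDivisors hn (Finset.mem_powerset.1 hS))
    (fun d hd => Finset.mem_powerset.2 (primeFactors_mono (mem_unitaryDivisors.1 hd).1 hn))
    (fun S hS => primeFactors_prod_pow_factorization (Finset.mem_powerset.1 hS))
    (fun d hd => prod_primeFactors_pow_factorization_of_mem_unitaryDivisors hd)
    (fun _ _ => rfl)).symm

theorem factorization_usigma {n : ℕ} (hn : n ≠ 0) (q : ℕ) :
    (usigma n).factorization q =
      ∑ p ∈ n.primeFactors, (p ^ n.factorization p + 1).factorization q := by
  rw [usigma_eq_prod_primeFactors hn, factorization_prod fun _ _ => succ_ne_zero _,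
    Finsupp.finsetSum_apply]

end Nat

theorem two_adic_balance_general (n a : ℕ) (hupn : usigma n = 2 * n)
    (hdvd : 2 ^ a ∣ n) (hndvd : ¬ 2 ^ (a + 1) ∣ n) :
    a + 1 = ∑ p ∈ n.primeFactors.filter (fun p => p ≠ 2),
      padicValNat 2 (p ^ n.factorization p + 1) := by
  have hn : n ≠ 0 := by rintro rfl; exact hndvd (dvd_zero _)
  have ha : n.factorization 2 = a := by
    have := Nat.prime_two.pow_dvd_iff_le_factorization (k := a) hn
    have := Nat.prime_two.pow_dvd_iff_le_factorization (k := a + 1) hn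
    omega
  have hodd : ∀ p ∈ n.primeFactors,
      (p ^ n.factorization p + 1).factorization 2 ≠ 0 → p ≠ 2 := by
    rintro p hp hval rfl
    refine hval (Nat.factorization_eq_zero_of_not_dvd fun h2 => ?_)
    have h2pow := dvd_pow_self 2 (Nat.factorization_ne_zero_of_mem_primeFactors hp)
    have : 2 ∣ 1 := (Nat.dvd_add_right h2pow).1 h2
    omega
  have hval := Nat.factorization_usigma hn 2
  rw [hupn, Nat.factorization_mul two_ne_zero hn, Finsupp.add_apply,
    Nat.prime_two.factorization_self, ha, ← Finset.sum_filter_of_ne hodd] at hval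
  simp_rw [← Nat.factorization_def _ Nat.prime_two]
  omega

/-- If `n` is a unitary perfect number with `2^a ∥ n`, then
`a + 1 = ∑_p v_2(p^{e_p} + 1)`, the sum over odd primes `p ∣ n`,
where `e_p` is the exponent of `p` in `n`. -/
theorem two_adic_balance (n a : ℕ) (hn : 0 < n) (hupn : usigma n = 2 * n)
    (hdvd : 2 ^ a ∣ n) (hndvd : ¬ 2 ^ (a + 1) ∣ n) :
    a + 1 = ∑ p ∈ n.primeFactors.filter (fun p => p ≠ 2),
      padicValNat 2 (p ^ n.factorization p + 1) :=
  two_adic_balance_general n a hupn hdvd hndvd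
end

section
/- Suppose m = 2k ∈ H_even with k odd and k ≥ 1. Then: (1) every prime factor of k is a 3-Higgs prime; (2) for every prime q dividing k, v_q(k) ≤ 3; and (3) for every odd divisor d of k, 2d ∈ H_even. -/
/-- The 3-Higgs primes (OEIS A057447): `2` is 3-Higgs (vacuously, since `2 - 1 = 1` has no
prime factors), and an odd prime `p` is 3-Higgs iff every prime `q ∣ p - 1` is 3-Higgs and
occurs in `p - 1` with exponent at most `3`. -/
inductive Higgs3 : ℕ → Prop
  | mk (p : ℕ) (hp : p.Prime)
      (hrec : ∀ q : ℕ, q.Prime → q ∣ (p - 1) → Higgs3 q)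
      (hexp : ∀ q : ℕ, q.Prime → q ∣ (p - 1) → (p - 1).factorization q ≤ 3) :
      Higgs3 p

/-- `H = { m ≥ 1 : every prime factor of 2^m + 1 is 3-Higgs }`. -/
def Hset : Set ℕ := {m | 1 ≤ m ∧ ∀ q : ℕ, q.Prime → q ∣ 2 ^ m + 1 → Higgs3 q}

/-- `H_even = H ∩ 2ℤ`. -/
def Heven : Set ℕ := Hset ∩ {m | 2 ∣ m}

/-! If `q ^ e ∣ k` for an odd prime `q`, then `2 ^ (2 q ^ e) + 1` divides `2 ^ (2 k) + 1`, so
its prime factors are 3-Higgs. By lifting the exponent, one of them, `p`, does not divide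
`2 ^ (2 q ^ (e - 1)) + 1`; then `2` has order exactly `4 q ^ e` modulo `p`, so `q ^ e ∣ p - 1`,
and the recursive definition of 3-Higgs at `p` gives both `q ∈ 𝒫₃` and `e ≤ 3`. -/

lemma pow_add_one_dvd_pow_add_one {d k : ℕ} (a : ℕ) (hd : d ∣ k) (hk : Odd k) :
    a ^ d + 1 ∣ a ^ k + 1 := by
  obtain ⟨c, rfl⟩ := hd
  simpa only [pow_mul, one_pow] using (Nat.odd_mul.mp hk).2.nat_add_dvd_pow_add_pow (a ^ d) 1

lemma add_one_mul_lt_pow_add_one {x q : ℕ} (hx : 3 ≤ x) (hq : 3 ≤ q) :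
    (x + 1) * q < x ^ q + 1 := by
  induction q, hq using Nat.le_induction with
  | base => nlinarith [show x ^ 3 = x * x * x by ring]
  | succ q hq ih =>
    have : x + 1 ≤ x ^ q * (x - 1) :=
      calc x + 1 ≤ 3 * (x - 1) := by omega
        _ ≤ x ^ q * (x - 1) :=
          Nat.mul_le_mul_right _ (hx.trans (Nat.le_self_pow (by omega) x))
    have : x ^ q * (x - 1) + x ^ q = x ^ (q + 1) := by
      rw [pow_succ, ← Nat.mul_succ]; congr 1; omega
    nlinarith

/-- `x ^ q + 1` has a prime factor not dividing `x + 1`: otherwise lifting the exponent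
gives `x ^ q + 1 ∣ (x + 1) * q`, which is too small. -/
lemma exists_prime_dvd_pow_add_one_not_dvd_add_one {x q : ℕ} (hx : 3 ≤ x) (hxe : Even x)
    (hq : q.Prime) (hq2 : q ≠ 2) : ∃ p, p.Prime ∧ p ∣ x ^ q + 1 ∧ ¬ p ∣ x + 1 := by
  by_contra! h
  have hodd : Odd (x ^ q + 1) := (hxe.pow_of_ne_zero hq.ne_zero).add_one
  have hdvd : x ^ q + 1 ∣ (x + 1) * q := by
    rw [← Nat.factorization_prime_le_iff_dvd (by positivity) (by positivity [hq.pos])]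
    intro r hr
    by_cases hrB : r ∣ x ^ q + 1
    · have hrA := h r hr hrB
      have hrx : ¬ r ∣ x := fun hrx ↦ hr.one_lt.ne' (Nat.dvd_one.mp
        ((Nat.dvd_add_right hrx).mp hrA))
      have := Fact.mk hr
      have lte := padicValNat.pow_add_pow (hodd.of_dvd_nat hrB) (y := 1) (by simpa using hrA) hrx
        (hq.odd_of_ne_two hq2)
      rw [one_pow] at lte
      rw [Nat.factorization_mul (by omega) hq.ne_zero, Finsupp.add_apply,
        Nat.factorization_def _ hr, Nat.factorization_def _ hr, Nat.factorization_def _ hr, lte]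
    · simp [Nat.factorization_eq_zero_of_not_dvd hrB]
  have := Nat.le_of_dvd (by positivity [hq.pos]) hdvd
  have := add_one_mul_lt_pow_add_one hx (hq.two_le.lt_of_ne' hq2)
  omega

/-- The order of `a ^ q ^ (f + 1)` is `4` and that of `a ^ 4` is `q ^ (f + 1)`. -/
lemma four_mul_pow_dvd_sub_one {p q f : ℕ} [Fact p.Prime] (hp2 : p ≠ 2) (hq : q.Prime)
    (hq2 : q ≠ 2) {a : ZMod p} (hneg : a ^ (2 * q ^ (f + 1)) = -1)
    (hne : a ^ (2 * q ^ f) ≠ -1) : 4 * q ^ (f + 1) ∣ p - 1 := by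
  have := Fact.mk hq
  have : Fact (2 < p) := ⟨(Fact.out : p.Prime).two_le.lt_of_ne' hp2⟩
  have hone : (-1 : ZMod p) ≠ 1 := ZMod.neg_one_ne_one
  have ha : a ≠ 0 := by
    rintro rfl
    rw [zero_pow (mul_pos two_pos (pow_pos hq.pos _)).ne'] at hneg
    exact neg_ne_zero.mpr one_ne_zero hneg.symm
  have hsq : a ^ (2 * q ^ (f + 1)) = (a ^ (2 * q ^ f)) ^ q := by
    rw [← pow_mul]; ring_nf
  have hord4 : orderOf (a ^ q ^ (f + 1)) = 2 ^ 2 := by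
    apply orderOf_eq_prime_pow
    · rw [← pow_mul, pow_one, mul_comm, hneg]
      exact hone
    · rw [← pow_mul, show q ^ (f + 1) * 2 ^ (1 + 1) = 2 * q ^ (f + 1) * 2 by ring, pow_mul,
        hneg, neg_one_sq]
  have hordq : orderOf (a ^ 4) = q ^ (f + 1) := by
    apply orderOf_eq_prime_pow
    · rw [← pow_mul, show 4 * q ^ f = 2 * q ^ f * 2 by ring, pow_mul, sq_eq_one_iff]
      rintro (h | h)
      · rw [hsq, h, one_pow] at hneg
        exact hone hneg.symm
      · exact hne h
    · rw [← pow_mul, show 4 * q ^ (f + 1) = 2 * q ^ (f + 1) * 2 by ring, pow_mul, hneg,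
        neg_one_sq]
  have h4 := hord4 ▸ ZMod.orderOf_dvd_card_sub_one (pow_ne_zero _ ha)
  have hqdvd := hordq ▸ ZMod.orderOf_dvd_card_sub_one (pow_ne_zero 4 ha)
  have hcop : Nat.Coprime (2 ^ 2) (q ^ (f + 1)) :=
    ((Nat.coprime_primes Nat.prime_two hq).mpr hq2.symm).pow 2 (f + 1)
  exact hcop.mul_dvd_of_dvd_of_dvd h4 hqdvd

lemma exists_prime_dvd_two_pow_add_one {q : ℕ} (hq : q.Prime) (hq2 : q ≠ 2) (f : ℕ) :
    ∃ p, p.Prime ∧ p ∣ 2 ^ (2 * q ^ (f + 1)) + 1 ∧ 4 * q ^ (f + 1) ∣ p - 1 := by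
  have hf : 2 * q ^ f ≠ 0 := by positivity [hq.pos]
  set x := 2 ^ (2 * q ^ f) with hxdef
  have hxq : 2 ^ (2 * q ^ (f + 1)) = x ^ q := by rw [← pow_mul]; ring_nf
  have hx : 3 ≤ x :=
    le_trans (by norm_num) (Nat.pow_le_pow_right two_pos (by omega : 2 ≤ 2 * q ^ f))
  obtain ⟨p, hp, hpB, hpA⟩ :=
    exists_prime_dvd_pow_add_one_not_dvd_add_one hx (even_two.pow_of_ne_zero hf) hq hq2
  rw [← hxq] at hpB
  refine ⟨p, hp, hpB, ?_⟩
  have := Fact.mk hp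
  have hp2 : p ≠ 2 :=
    (even_two.pow_of_ne_zero (by positivity [hq.pos])).add_one.ne_two_of_dvd_nat hpB
  apply four_mul_pow_dvd_sub_one hp2 hq hq2 (a := 2)
  · have h := (ZMod.natCast_eq_zero_iff _ p).mpr hpB
    push_cast at h
    exact eq_neg_of_add_eq_zero_left h
  · intro h
    apply hpA
    rw [← ZMod.natCast_eq_zero_iff, hxdef]
    push_cast
    rw [h, neg_add_cancel]

lemma Higgs3.of_dvd_sub_one {p q : ℕ} (hp : Higgs3 p) (hq : q.Prime) (hqp : q ∣ p - 1) :
    Higgs3 q := by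
  cases hp with
  | mk _ _ hrec _ => exact hrec q hq hqp

lemma Higgs3.factorization_sub_one_le {p q : ℕ} (hp : Higgs3 p) (hq : q.Prime)
    (hqp : q ∣ p - 1) : (p - 1).factorization q ≤ 3 := by
  cases hp with
  | mk _ _ _ hexp => exact hexp q hq hqp

lemma two_mul_mem_Hset_of_dvd {d k : ℕ} (hd : d ∣ k) (hk : Odd k) (h : 2 * k ∈ Hset) :
    2 * d ∈ Hset := by
  refine ⟨by have := Nat.pos_of_dvd_of_pos hd hk.pos; omega, fun p hp hpd ↦ h.2 p hp ?_⟩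
  exact hpd.trans (by simpa only [pow_mul] using pow_add_one_dvd_pow_add_one (2 ^ 2) hd hk)

lemma higgs3_and_le_three_of_two_mul_prime_pow_mem_Hset {q e : ℕ} (hq : q.Prime) (hq2 : q ≠ 2)
    (he : e ≠ 0) (h : 2 * q ^ e ∈ Hset) : Higgs3 q ∧ e ≤ 3 := by
  obtain ⟨f, rfl⟩ := Nat.exists_eq_succ_of_ne_zero he
  obtain ⟨p, hp, hpB, hdvd⟩ := exists_prime_dvd_two_pow_add_one hq hq2 f
  have hHp : Higgs3 p := h.2 p hp hpB
  have hqe : q ^ (f + 1) ∣ p - 1 := (dvd_mul_left _ 4).trans hdvd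
  have hqp : q ∣ p - 1 := (dvd_pow_self q f.succ_ne_zero).trans hqe
  have hle : f + 1 ≤ (p - 1).factorization q :=
    (hq.pow_dvd_iff_le_factorization (by have := hp.two_le; omega)).mp hqe
  exact ⟨hHp.of_dvd_sub_one hq hqp, hle.trans (hHp.factorization_sub_one_le hq hqp)⟩

theorem Heven_structural_general (k : ℕ) (hkodd : Odd k) (hm : 2 * k ∈ Heven) :
    (∀ q : ℕ, q.Prime → q ∣ k → Higgs3 q) ∧
    (∀ q : ℕ, q.Prime → q ∣ k → k.factorization q ≤ 3) ∧
    (∀ d : ℕ, d ∣ k → Odd d → 2 * d ∈ Heven) := by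
  have hH : ∀ d, d ∣ k → 2 * d ∈ Hset := fun d hd ↦ two_mul_mem_Hset_of_dvd hd hkodd hm.1
  have hne_two : ∀ q, q ∣ k → q ≠ 2 := fun _ ↦ hkodd.ne_two_of_dvd_nat
  refine ⟨fun q hq hqk ↦ ?_, fun q hq hqk ↦ ?_, fun d hd _ ↦ ⟨hH d hd, dvd_mul_right 2 d⟩⟩
  · have h2q : 2 * q ^ 1 ∈ Hset := by simpa only [pow_one] using hH q hqk
    exact (higgs3_and_le_three_of_two_mul_prime_pow_mem_Hset hq (hne_two q hqk)
      one_ne_zero h2q).1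
  · have hval : k.factorization q ≠ 0 := (hq.factorization_pos_of_dvd hkodd.pos.ne' hqk).ne'
    exact (higgs3_and_le_three_of_two_mul_prime_pow_mem_Hset hq (hne_two q hqk) hval
      (hH _ (Nat.ordProj_dvd k q))).2

/-- Structural lemma: if `m = 2k ∈ H_even` with `k` odd and `k ≥ 1`, then
(1) every prime factor of `k` is 3-Higgs, (2) every prime `q ∣ k` has `v_q(k) ≤ 3`,
and (3) every odd divisor `d ∣ k` satisfies `2d ∈ H_even`. -/
theorem Heven_structural (k : ℕ) (hk : 1 ≤ k) (hkodd : Odd k) (hm : 2 * k ∈ Heven) :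
    (∀ q : ℕ, q.Prime → q ∣ k → Higgs3 q) ∧
    (∀ q : ℕ, q.Prime → q ∣ k → k.factorization q ≤ 3) ∧
    (∀ d : ℕ, d ∣ k → Odd d → 2 * d ∈ Heven) :=
  Heven_structural_general k hkodd hm
end

section
/- Every element of H_even is congruent to 2 modulo 4; that is, H_even ⊆ { m : m ≡ 2 (mod 4) }. -/
/-!
A 3-Higgs prime `q` has `v₂(q - 1) ≤ 3`, so it suffices to find, for `4 ∣ m`, a prime factor `q`
of `2 ^ m + 1` with `16 ∣ q - 1`. If `m = 4t` with `t` odd, then `17 = 2 ^ 4 + 1` divides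
`(2 ^ 4) ^ t + 1`. If `8 ∣ m`, then `2 ^ m + 1 = (2 ^ (m / 8)) ^ (2 ^ 3) + 1`, and every odd prime
factor of `a ^ (2 ^ 3) + 1` is `1 mod 2 ^ 4`, since `a` has multiplicative order `2 ^ 4` modulo it.
-/

theorem Higgs3.not_two_pow_four_dvd_sub_one {q : ℕ} (hq : Higgs3 q) : ¬ 2 ^ 4 ∣ q - 1 := by
  obtain ⟨q, hq, -, hexp⟩ := hq
  intro h16
  have hq1 : q - 1 ≠ 0 := by have := hq.two_le; omega
  have hle := hexp 2 Nat.prime_two (dvd_trans (dvd_pow_self 2 (by norm_num)) h16)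
  have hge := (Nat.prime_two.pow_dvd_iff_le_factorization hq1).mp h16
  omega

theorem seventeen_dvd_two_pow_four_mul_add_one {t : ℕ} (ht : Odd t) : 17 ∣ 2 ^ (4 * t) + 1 := by
  have h := ht.nat_add_dvd_pow_add_pow (2 ^ 4) 1
  rwa [one_pow, ← pow_mul] at h

theorem exists_prime_dvd_two_pow_eight_mul_add_one {s : ℕ} (hs : s ≠ 0) :
    ∃ q, q.Prime ∧ q ∣ 2 ^ (8 * s) + 1 ∧ 2 ^ 4 ∣ q - 1 := by
  have hodd : Odd (2 ^ (8 * s) + 1) := (Nat.even_pow.mpr ⟨even_two, by omega⟩).add_one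
  set q := (2 ^ (8 * s) + 1).minFac
  have hq : q.Prime := Nat.minFac_prime (by have := Nat.one_le_two_pow (n := 8 * s); omega)
  have hqdvd : q ∣ 2 ^ (8 * s) + 1 := Nat.minFac_dvd _
  have hfermat : q ∣ (2 ^ s) ^ 2 ^ 3 + 1 := by rwa [← pow_mul, mul_comm]
  obtain ⟨k, hk⟩ := Nat.pow_pow_add_primeFactors_one_lt hq (hodd.ne_two_of_dvd_nat hqdvd) hfermat
  exact ⟨q, hq, hqdvd, ⟨k, by omega⟩⟩

theorem exists_prime_dvd_two_pow_add_one_two_pow_four_dvd_sub_one {m : ℕ} (h4 : 4 ∣ m)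
    (hm : m ≠ 0) :
    ∃ q, q.Prime ∧ q ∣ 2 ^ m + 1 ∧ 2 ^ 4 ∣ q - 1 := by
  obtain ⟨t, rfl⟩ := h4
  rcases Nat.even_or_odd t with ⟨s, rfl⟩ | ht
  · simpa [show 4 * (s + s) = 8 * s by ring] using
      exists_prime_dvd_two_pow_eight_mul_add_one (s := s) (by omega)
  · exact ⟨17, by norm_num, seventeen_dvd_two_pow_four_mul_add_one ht, by norm_num⟩

/-- Fermat-prime obstruction: every element of `H_even` is congruent to `2` mod `4`. -/
theorem Heven_mod_four : Heven ⊆ {m : ℕ | m % 4 = 2} := by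
  rintro m ⟨⟨hm1, hH⟩, hev : 2 ∣ m⟩
  by_contra hm4 : m % 4 ≠ 2
  obtain ⟨q, hq, hqdvd, h16⟩ :=
    exists_prime_dvd_two_pow_add_one_two_pow_four_dvd_sub_one (m := m) (by omega) (by omega)
  exact (hH q hq hqdvd).not_two_pow_four_dvd_sub_one h16
end

section
/- Let k ≥ 2 and let q be any prime divisor of the Fermat number F_k = 2^{2^k} + 1. Then q ≡ 1 (mod 2^{k+2}); in particular v_2(q − 1) ≥ k + 2 > 3. -/
theorem Nat.two_pow_add_two_dvd_sub_one_of_dvd_fermatNumber {k q : ℕ} (hk : 1 < k)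
    (hq : q.Prime) (hdvd : q ∣ fermatNumber k) : 2 ^ (k + 2) ∣ q - 1 := by
  obtain ⟨m, rfl⟩ := fermat_primeFactors_one_lt k q hk hq hdvd
  simp

/-- (Lucas) If `k ≥ 2` and `q` is a prime divisor of the Fermat number `F_k = 2^(2^k) + 1`,
then `q ≡ 1 (mod 2^(k+2))`; in particular `v_2(q - 1) ≥ k + 2 > 3`. -/
theorem fermat_factor_mod (k q : ℕ) (hk : 2 ≤ k) (hq : q.Prime)
    (hdvd : q ∣ 2 ^ 2 ^ k + 1) :
    q ≡ 1 [MOD 2 ^ (k + 2)] ∧ k + 2 ≤ padicValNat 2 (q - 1) ∧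
      3 < padicValNat 2 (q - 1) := by
  have hdvd_sub : 2 ^ (k + 2) ∣ q - 1 :=
    Nat.two_pow_add_two_dvd_sub_one_of_dvd_fermatNumber hk hq hdvd
  have hval : k + 2 ≤ padicValNat 2 (q - 1) :=
    (padicValNat_dvd_iff_le_of_ne_one (by norm_num) (by have := hq.two_le; omega)).mp hdvd_sub
  exact ⟨((Nat.modEq_iff_dvd' hq.one_le).mpr hdvd_sub).symm, hval, by omega⟩
end

section
/- H_even is finite if and only if the set H_even^prime := { m = 2p ∈ H_even : p an odd prime } is finite. More precisely, if H_even^prime has cardinality N, then |H_even| ≤ 4^N. -/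
/-- `H_even^prime`: elements of `H_even` of the form `2p` with `p` an odd prime. -/
def HevenPrime : Set ℕ := {m ∈ Heven | ∃ p : ℕ, p.Prime ∧ Odd p ∧ m = 2 * p}

/-!
Write `m ∈ H_even` as `2 ^ a * k` with `k` odd. Since `2 ^ d + 1 ∣ 2 ^ (d * k) + 1` for odd `k`,
`d * k ∈ H` implies `d ∈ H`. The prime factors `q` of `2 ^ 2 ^ a + 1` have `2` of order
`2 ^ (a + 1)` modulo `q`, so `2 ^ (a + 1) ∣ q - 1`; together with `17 ∣ 2 ^ 4 + 1` this forces
`a = 1`. For an odd prime `p ∣ m` we get `2p ∈ H_even^prime`, and `p ^ 4 ∤ m`: with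
`A = 4 ^ p ^ 3`, a prime `q ∣ A ^ p + 1` with `q ∤ A + 1` makes `-4` of order `p ^ 4` modulo `q`,
so `p ^ 4 ∣ q - 1`; and such a `q` exists, since otherwise lifting the exponent at each prime
gives `A ^ p + 1 ∣ (A + 1) * p`, which is too small. So `m` is determined by the exponents
`v_p(m) ≤ 3` at the primes `p` with `2p ∈ H_even^prime`.
-/

theorem Higgs3.not_pow_four_dvd_sub_one {q r : ℕ} (hq : Higgs3 q) (hr : r.Prime) :
    ¬ r ^ 4 ∣ q - 1 := by
  obtain ⟨q, hq, -, hexp⟩ := hq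
  intro h
  have hr_dvd : r ∣ q - 1 := (dvd_pow_self r four_ne_zero).trans h
  have := hexp r hr hr_dvd
  rw [hr.pow_dvd_iff_le_factorization (by have := hq.two_le; omega)] at h
  omega

theorem pow_add_one_dvd_pow_mul_add_one (x a : ℕ) {k : ℕ} (hk : Odd k) :
    x ^ a + 1 ∣ x ^ (a * k) + 1 := by
  simpa [pow_mul] using Odd.nat_add_dvd_pow_add_pow (x ^ a) 1 hk

theorem mem_Hset_of_mul_odd {a k : ℕ} (h : a * k ∈ Hset) (hk : Odd k) : a ∈ Hset :=
  ⟨Nat.one_le_iff_ne_zero.2 (left_ne_zero_of_mul (Nat.one_le_iff_ne_zero.1 h.1)),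
    fun q hq hqa => h.2 q hq (hqa.trans (pow_add_one_dvd_pow_mul_add_one 2 a hk))⟩

theorem ZMod.prime_pow_succ_dvd_sub_one {q p k : ℕ} [Fact q.Prime] [Fact p.Prime] {x : ZMod q}
    (hx : ¬ x ^ p ^ k = 1) (hx' : x ^ p ^ (k + 1) = 1) : p ^ (k + 1) ∣ q - 1 := by
  have hx0 : x ≠ 0 := by
    rintro rfl
    simp [(Fact.out : p.Prime).ne_zero] at hx'
  rw [← orderOf_eq_prime_pow hx hx']
  exact ZMod.orderOf_dvd_card_sub_one hx0

theorem two_pow_succ_dvd_sub_one_of_dvd_fermat {q k : ℕ} (hq : q.Prime)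
    (h : q ∣ 2 ^ 2 ^ k + 1) : 2 ^ (k + 1) ∣ q - 1 := by
  have : Fact q.Prime := ⟨hq⟩
  have hq2 : q ≠ 2 := by
    rintro rfl
    exact (Nat.even_pow.2 ⟨even_two, by positivity⟩).add_one.not_two_dvd_nat h
  have : Fact (2 < q) := ⟨lt_of_le_of_ne hq.two_le hq2.symm⟩
  have hx : (2 : ZMod q) ^ 2 ^ k = -1 := by
    rw [eq_neg_iff_add_eq_zero]
    exact_mod_cast (ZMod.natCast_eq_zero_iff _ q).2 h
  refine ZMod.prime_pow_succ_dvd_sub_one (x := (2 : ZMod q)) ?_ ?_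
  · rw [hx]
    exact ZMod.neg_one_ne_one
  · rw [pow_succ, pow_mul, hx, neg_one_sq]

theorem prime_pow_succ_dvd_sub_one_of_dvd_pow_add_one {a p q k : ℕ} (hp : p.Prime)
    (hp_odd : Odd p) (hq : q.Prime) (h : q ∣ a ^ p ^ (k + 1) + 1) (h' : ¬ q ∣ a ^ p ^ k + 1) :
    p ^ (k + 1) ∣ q - 1 := by
  have : Fact q.Prime := ⟨hq⟩
  have : Fact p.Prime := ⟨hp⟩
  have hdvd_iff (j : ℕ) : q ∣ a ^ p ^ j + 1 ↔ (-(a : ZMod q)) ^ p ^ j = 1 := by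
    rw [← ZMod.natCast_eq_zero_iff, hp_odd.pow.neg_pow, neg_eq_iff_eq_neg, eq_neg_iff_add_eq_zero]
    push_cast
    rfl
  exact ZMod.prime_pow_succ_dvd_sub_one (mt (hdvd_iff k).2 h') ((hdvd_iff (k + 1)).1 h)

theorem pow_add_one_dvd_mul_of_forall_prime_dvd {A n : ℕ} (hA : Even A) (hn : Odd n)
    (h : ∀ q, q.Prime → q ∣ A ^ n + 1 → q ∣ A + 1) : A ^ n + 1 ∣ (A + 1) * n := by
  refine (Nat.dvd_iff_prime_pow_dvd_dvd _ _).2 fun q e hq hqe => ?_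
  rcases e.eq_zero_or_pos with rfl | he
  · simp
  have : Fact q.Prime := ⟨hq⟩
  have hqA : q ∣ A ^ n + 1 := (dvd_pow_self q he.ne').trans hqe
  have hq2 : Odd q := hq.odd_of_ne_two <| by
    rintro rfl
    exact (hA.pow_of_ne_zero hn.pos.ne').add_one.not_two_dvd_nat hqA
  have hqA' : ¬ q ∣ A := fun hqA' =>
    hq.one_lt.ne' (Nat.dvd_one.1 ((Nat.dvd_add_right (dvd_pow hqA' hn.pos.ne')).1 hqA))
  have hA1 : A + 1 ≠ 0 := A.succ_ne_zero
  rw [padicValNat_dvd_iff_le (by positivity)] at hqe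
  rw [padicValNat_dvd_iff_le (mul_ne_zero hA1 hn.pos.ne'), padicValNat.mul hA1 hn.pos.ne',
    ← padicValNat.pow_add_pow hq2 (by simpa using h q hq hqA) hqA' hn, one_pow]
  exact hqe

theorem exists_prime_dvd_pow_add_one_not_dvd_add_one_s8 {A n : ℕ} (hA : Even A) (hn : Odd n)
    (h1n : 1 < n) (hnA : n < A) : ∃ q, q.Prime ∧ q ∣ A ^ n + 1 ∧ ¬ q ∣ A + 1 := by
  by_contra! h
  have hle := Nat.le_of_dvd (by positivity) (pow_add_one_dvd_mul_of_forall_prime_dvd hA hn h)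
  have hA2 : A ^ 2 ≤ A ^ n := Nat.pow_le_pow_right (by omega) h1n
  nlinarith

theorem two_pow_not_mem_Hset {a : ℕ} (ha : 2 ≤ a) : 2 ^ a ∉ Hset := by
  intro h
  obtain rfl | ha := ha.eq_or_lt
  -- `2 ^ 2 ^ 2 + 1 = 17` and `17 - 1 = 2 ^ 4`
  · exact (h.2 17 (by norm_num) (by norm_num)).not_pow_four_dvd_sub_one Nat.prime_two (by norm_num)
  obtain ⟨q, hq, hqa⟩ := Nat.exists_prime_and_dvd (by simp : 2 ^ 2 ^ a + 1 ≠ 1)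
  exact (h.2 q hq hqa).not_pow_four_dvd_sub_one Nat.prime_two
    ((pow_dvd_pow 2 (by omega)).trans (two_pow_succ_dvd_sub_one_of_dvd_fermat hq hqa))

theorem two_mul_prime_pow_four_not_mem_Hset {p : ℕ} (hp : p.Prime) (hp_odd : Odd p) :
    2 * p ^ 4 ∉ Hset := by
  intro h
  have hpA : p < 4 ^ p ^ 3 := calc
    p < 4 ^ p := Nat.lt_pow_self (by norm_num)
    _ ≤ 4 ^ p ^ 3 := Nat.pow_le_pow_right (by norm_num) (Nat.le_self_pow (by norm_num) p)
  obtain ⟨q, hq, hqM, hqB⟩ := exists_prime_dvd_pow_add_one_not_dvd_add_one_s8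
    (A := 4 ^ p ^ 3) (Nat.even_pow.2 ⟨by decide, pow_ne_zero 3 hp.ne_zero⟩) hp_odd hp.one_lt hpA
  rw [← pow_mul, ← pow_succ] at hqM
  refine (h.2 q hq ?_).not_pow_four_dvd_sub_one hp
    (prime_pow_succ_dvd_sub_one_of_dvd_pow_add_one hp hp_odd hq hqM hqB)
  rwa [pow_mul]

theorem Nat.odd_ordCompl_two {n : ℕ} (hn : n ≠ 0) : Odd (ordCompl[2] n) :=
  Nat.odd_iff.2 (Nat.two_dvd_ne_zero.1 (Nat.not_dvd_ordCompl Nat.prime_two hn))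

namespace Heven

variable {m : ℕ}

theorem ne_zero (hm : m ∈ Heven) : m ≠ 0 :=
  Nat.one_le_iff_ne_zero.1 hm.1.1

theorem factorization_two (hm : m ∈ Heven) : m.factorization 2 = 1 := by
  have h1 : 1 ≤ m.factorization 2 :=
    (Nat.prime_two.pow_dvd_iff_le_factorization (Heven.ne_zero hm)).1 (by simpa using hm.2)
  have h2 : 2 ^ m.factorization 2 ∈ Hset :=
    mem_Hset_of_mul_odd ((Nat.ordProj_mul_ordCompl_eq_self m 2).symm ▸ hm.1)
      (Nat.odd_ordCompl_two (Heven.ne_zero hm))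
  by_contra h
  exact two_pow_not_mem_Hset (by omega) h2

theorem two_mul_mem_Hset_of_dvd {d : ℕ} (hm : m ∈ Heven) (hd : Odd d) (hdm : d ∣ m) :
    2 * d ∈ Hset := by
  have hm_eq : 2 * ordCompl[2] m = m := by
    simpa [factorization_two hm] using Nat.ordProj_mul_ordCompl_eq_self m 2
  obtain ⟨j, hj⟩ : d ∣ ordCompl[2] m :=
    hd.coprime_two_right.dvd_of_dvd_mul_left (by rwa [hm_eq])
  have hj_odd : Odd j := (Nat.odd_mul.1 (hj ▸ Nat.odd_ordCompl_two (Heven.ne_zero hm))).2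
  refine mem_Hset_of_mul_odd ?_ hj_odd
  rw [mul_assoc, ← hj, hm_eq]
  exact hm.1

theorem two_mul_mem_HevenPrime {p : ℕ} (hm : m ∈ Heven) (hp : p.Prime) (hp_odd : Odd p)
    (hpm : p ∣ m) : 2 * p ∈ HevenPrime :=
  ⟨⟨two_mul_mem_Hset_of_dvd hm hp_odd hpm, dvd_mul_right 2 p⟩, p, hp, hp_odd, rfl⟩

theorem factorization_le_three (hm : m ∈ Heven) (p : ℕ) : m.factorization p ≤ 3 := by
  obtain rfl | hp2 := eq_or_ne p 2
  · simp [factorization_two hm]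
  by_contra! h
  have hp : p.Prime := Nat.prime_of_mem_primeFactors
    (Nat.support_factorization m ▸ Finsupp.mem_support_iff.2 (by omega))
  have hp_odd := hp.odd_of_ne_two hp2
  have hp4 : p ^ 4 ∣ m := (hp.pow_dvd_iff_le_factorization (Heven.ne_zero hm)).2 h
  exact two_mul_prime_pow_four_not_mem_Hset hp hp_odd (two_mul_mem_Hset_of_dvd hm hp_odd.pow hp4)

theorem factorization_eq_zero {p : ℕ} (hm : m ∈ Heven) (hp2 : p ≠ 2)
    (hp : 2 * p ∉ HevenPrime) : m.factorization p = 0 := by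
  by_contra h
  have hp' : p.Prime :=
    Nat.prime_of_mem_primeFactors (Nat.support_factorization m ▸ Finsupp.mem_support_iff.2 h)
  exact hp (two_mul_mem_HevenPrime hm hp' (hp'.odd_of_ne_two hp2)
    (Nat.dvd_of_factorization_pos h))

theorem eq_of_factorization_eq {m' : ℕ} (hm : m ∈ Heven) (hm' : m' ∈ Heven)
    (h : ∀ p, 2 * p ∈ HevenPrime → m.factorization p = m'.factorization p) : m = m' := by
  refine Nat.eq_of_factorization_eq (Heven.ne_zero hm) (Heven.ne_zero hm') fun p => ?_
  by_cases hp2 : p = 2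
  · rw [hp2, factorization_two hm, factorization_two hm']
  by_cases hp : 2 * p ∈ HevenPrime
  · exact h p hp
  · rw [factorization_eq_zero hm hp2 hp, factorization_eq_zero hm' hp2 hp]

theorem finite_and_ncard_le (hT : HevenPrime.Finite) :
    Heven.Finite ∧ Heven.ncard ≤ 4 ^ HevenPrime.ncard := by
  let code (m : ℕ) (x : hT.toFinset) : Fin 4 := ⟨min (m.factorization (x / 2)) 3, by omega⟩
  have hinj : Set.InjOn code Heven := fun m hm m' hm' hcode =>
    eq_of_factorization_eq hm hm' fun p hp => by
      have hcode_p := congrArg Fin.val (congrFun hcode ⟨2 * p, hT.mem_toFinset.2 hp⟩)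
      simp only [code, Nat.mul_div_cancel_left p two_pos] at hcode_p
      have := factorization_le_three hm p
      have := factorization_le_three hm' p
      omega
  refine ⟨Set.Finite.of_finite_image (Set.toFinite _) hinj, ?_⟩
  have := Set.ncard_le_ncard_of_injOn code (fun _ _ => Set.mem_univ _) hinj Set.finite_univ
  rwa [Set.ncard_univ, Nat.card_fun, Nat.card_fin, Nat.card_eq_fintype_card, Fintype.card_coe,
    ← Set.ncard_eq_toFinset_card _ hT] at this

end Heven

/-- Reduction to the prime case: `H_even` is finite iff `H_even^prime` is finite; more
precisely, if `H_even^prime` has cardinality `N`, then `|H_even| ≤ 4^N`. -/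
theorem Heven_finite_iff_prime_case :
    (Heven.Finite ↔ HevenPrime.Finite) ∧
    (HevenPrime.Finite → Heven.ncard ≤ 4 ^ HevenPrime.ncard) :=
  ⟨⟨fun h => h.subset (Set.sep_subset _ _), fun hT => (Heven.finite_and_ncard_le hT).1⟩,
    fun hT => (Heven.finite_and_ncard_le hT).2⟩
end

section
/- Let P = {p_1 < p_2 < ⋯} be an infinite set of primes, let 𝒮(P) = { ∏_j p_j^{e_j} : 0 ≤ e_j ≤ 3 } be the bounded-exponent semigroup on P, and let A_P(x) = #(𝒮(P) ∩ [1, x]). If A_P(x) = o(log x) as x → ∞, then #{ p ∈ P : p ≤ x } = O(log log x). -/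
/-!
If `F` is a set of `k` primes of `P` below `x`, the `2 ^ k` products of subsets of `F` are
distinct squarefree elements of `𝒮(P)`, all at most `x ^ k`. Hence `A_P(x ^ (k + 1)) ≥ 2 ^ k`,
while `A_P(y) = o(log y)` gives `A_P(x ^ (k + 1)) ≤ (k + 1) log x / 2` for large `x`. Since
`(k + 1) ^ 2 ≤ 2 ^ (k + 2)`, these force `2 ^ k ≤ (log x) ^ 2`, i.e. `k ≤ 2 log log x / log 2`.
-/

open Filter Asymptotics

/-- `𝒮(P)`: positive integers all of whose prime factors lie in `P` and occur with
exponent at most `3`. -/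
def SP (P : Set ℕ) : Set ℕ :=
  {n | 1 ≤ n ∧ ∀ q : ℕ, q.Prime → q ∣ n → q ∈ P ∧ n.factorization q ≤ 3}

lemma Nat.sq_le_two_pow_succ (n : ℕ) : n ^ 2 ≤ 2 ^ (n + 1) := by
  induction n with
  | zero => norm_num
  | succ n ih =>
    have := Nat.lt_two_pow_self (n := n)
    calc (n + 1) ^ 2 = n ^ 2 + 2 * n + 1 := by ring
      _ ≤ 2 ^ (n + 1) + 2 ^ (n + 1) := by rw [pow_succ 2 n]; omega
      _ = 2 ^ (n + 2) := by ring

lemma two_pow_le_sq_of_two_pow_le_succ_mul {k : ℕ} {L : ℝ} (h : (2 : ℝ) ^ k ≤ (k + 1) * L / 2) :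
    (2 : ℝ) ^ k ≤ L ^ 2 := by
  have hk : ((k : ℝ) + 1) ^ 2 ≤ 2 ^ (k + 2) := by exact_mod_cast Nat.sq_le_two_pow_succ (k + 1)
  have hpos : (0 : ℝ) < 2 ^ k := by positivity
  have hsq : ((2 : ℝ) ^ k) ^ 2 ≤ 2 ^ k * L ^ 2 := by
    calc ((2 : ℝ) ^ k) ^ 2 ≤ ((k + 1) * L / 2) ^ 2 := pow_le_pow_left₀ hpos.le h 2
      _ = ((k : ℝ) + 1) ^ 2 * L ^ 2 / 4 := by ring
      _ ≤ 2 ^ (k + 2) * L ^ 2 / 4 := by gcongr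
      _ = 2 ^ k * L ^ 2 := by ring
  exact le_of_mul_le_mul_left (by rwa [sq] at hsq) hpos

lemma Nat.squarefree_prod_of_prime {s : Finset ℕ} (hs : ∀ p ∈ s, p.Prime) :
    Squarefree (∏ p ∈ s, p) :=
  Finset.squarefree_prod_of_pairwise_isCoprime
    (fun p hp q hq hpq =>
      Nat.coprime_iff_isRelPrime.1 ((Nat.coprime_primes (hs p hp) (hs q hq)).2 hpq))
    fun p hp => (hs p hp).squarefree

lemma prod_mem_SP {P : Set ℕ} {s : Finset ℕ} (hs : ∀ p ∈ s, p.Prime) (hsP : ↑s ⊆ P) :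
    ∏ p ∈ s, p ∈ SP P := by
  have hsq := Nat.squarefree_prod_of_prime hs
  refine ⟨Nat.one_le_iff_ne_zero.2 hsq.ne_zero, fun q hq hdvd => ⟨hsP ?_, ?_⟩⟩
  · rw [← Nat.primeFactors_prod hs]
    exact Nat.mem_primeFactors.2 ⟨hq, hdvd, hsq.ne_zero⟩
  · exact (hsq.natFactorization_le_one q).trans (by norm_num)

lemma finite_inter_setOf_cast_le (S : Set ℕ) (x : ℝ) : (S ∩ {n : ℕ | (n : ℝ) ≤ x}).Finite :=
  (Set.finite_Iic ⌊x⌋₊).subset fun _ hn => Nat.le_floor hn.2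

lemma two_pow_card_le_ncard_SP {P : Set ℕ} {F : Finset ℕ} (hF : ∀ p ∈ F, p.Prime) (hFP : ↑F ⊆ P)
    {x y : ℝ} (hx : 1 ≤ x) (hFx : ∀ p ∈ F, (p : ℝ) ≤ x) (hy : x ^ F.card ≤ y) :
    2 ^ F.card ≤ (SP P ∩ {n : ℕ | (n : ℝ) ≤ y}).ncard := by
  have hinj : Set.InjOn (fun s : Finset ℕ => ∏ p ∈ s, p) ↑F.powerset := by
    intro s hs t ht hst
    rw [Finset.mem_coe, Finset.mem_powerset] at hs ht
    rw [← Nat.primeFactors_prod fun p hp => hF p (hs hp),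
      ← Nat.primeFactors_prod fun p hp => hF p (ht hp)]
    exact congrArg Nat.primeFactors hst
  have hsub : ↑(F.powerset.image fun s => ∏ p ∈ s, p) ⊆ SP P ∩ {n : ℕ | (n : ℝ) ≤ y} := by
    intro n hn
    obtain ⟨s, hs, rfl⟩ := Finset.mem_image.1 hn
    rw [Finset.mem_powerset] at hs
    refine ⟨prod_mem_SP (fun p hp => hF p (hs hp)) (subset_trans (Finset.coe_subset.2 hs) hFP), ?_⟩
    calc ((∏ p ∈ s, p : ℕ) : ℝ) = ∏ p ∈ s, (p : ℝ) := Nat.cast_prod _ _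
      _ ≤ ∏ _p ∈ s, x := Finset.prod_le_prod (fun _ _ => by positivity) fun p hp => hFx p (hs hp)
      _ = x ^ s.card := Finset.prod_const x
      _ ≤ x ^ F.card := pow_le_pow_right₀ hx (Finset.card_le_card hs)
      _ ≤ y := hy
  calc 2 ^ F.card = (F.powerset.image fun s => ∏ p ∈ s, p).card := by
        rw [Finset.card_image_of_injOn hinj, Finset.card_powerset]
    _ = (↑(F.powerset.image fun s => ∏ p ∈ s, p) : Set ℕ).ncard := (Set.ncard_coe_finset _).symm
    _ ≤ _ := Set.ncard_le_ncard hsub (finite_inter_setOf_cast_le _ y)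

lemma ncard_mul_log_two_le_two_mul_log_log {P : Set ℕ} (hP : ∀ p ∈ P, p.Prime) {Y x : ℝ}
    (hA : ∀ y ≥ Y, ((SP P ∩ {n : ℕ | (n : ℝ) ≤ y}).ncard : ℝ) ≤ Real.log y / 2)
    (hxY : Y ≤ x) (hx : 1 < x) :
    ((P ∩ {p : ℕ | (p : ℝ) ≤ x}).ncard : ℝ) * Real.log 2 ≤ 2 * Real.log (Real.log x) := by
  have hfin := finite_inter_setOf_cast_le P x
  set F := hfin.toFinset
  have hmemF : ∀ p ∈ F, p ∈ P ∧ (p : ℝ) ≤ x := fun p hp => hfin.mem_toFinset.1 hp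
  rw [Set.ncard_eq_toFinset_card _ hfin]
  set L := Real.log x
  -- Evaluating at `x ^ (#F + 1)` rather than `x ^ #F` keeps the point `≥ x ≥ Y` even when `F = ∅`.
  have hxpow : x ≤ x ^ (F.card + 1) := le_self_pow₀ hx.le (Nat.succ_ne_zero _)
  have hlower := two_pow_card_le_ncard_SP (fun p hp => hP p (hmemF p hp).1)
    (fun p hp => (hmemF p hp).1) hx.le (fun p hp => (hmemF p hp).2)
    (pow_le_pow_right₀ hx.le (Nat.le_succ F.card))
  have hupper := hA _ (hxY.trans hxpow)
  rw [Real.log_pow] at hupper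
  have h2k : (2 : ℝ) ^ F.card ≤ L ^ 2 := by
    refine two_pow_le_sq_of_two_pow_le_succ_mul ?_
    push_cast at hlower hupper
    calc (2 : ℝ) ^ F.card ≤ _ := by exact_mod_cast hlower
      _ ≤ _ := hupper
  have hL : 0 < L := Real.log_pos hx
  simpa only [Real.log_pow, Nat.cast_ofNat] using Real.log_le_log (by positivity) h2k

theorem SP_sublog_forces_loglog_general (P : Set ℕ) (hP : ∀ p ∈ P, Nat.Prime p)
    (h : (fun x : ℝ => ((SP P ∩ {n : ℕ | (n : ℝ) ≤ x}).ncard : ℝ))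
      =o[atTop] Real.log) :
    (fun x : ℝ => ((P ∩ {p : ℕ | (p : ℝ) ≤ x}).ncard : ℝ))
      =O[atTop] fun x : ℝ => Real.log (Real.log x) := by
  obtain ⟨Y, hY⟩ := eventually_atTop.1 (h.def (by norm_num : (0 : ℝ) < 1 / 2))
  have hA : ∀ y ≥ max Y 1, ((SP P ∩ {n : ℕ | (n : ℝ) ≤ y}).ncard : ℝ) ≤ Real.log y / 2 := by
    intro y hy
    have := hY y (le_of_max_le_left hy)
    rwa [Real.norm_natCast, Real.norm_of_nonneg (Real.log_nonneg (le_of_max_le_right hy)),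
      one_div_mul_eq_div] at this
  have hlog2 : 0 < Real.log 2 := Real.log_pos one_lt_two
  refine IsBigO.of_bound (2 / Real.log 2) ?_
  filter_upwards [eventually_ge_atTop (max Y 1), eventually_gt_atTop 1] with x hxY hx
  rw [Real.norm_natCast, div_mul_eq_mul_div, le_div_iff₀ hlog2]
  exact (ncard_mul_log_two_le_two_mul_log_log hP hA hxY hx).trans
    (mul_le_mul_of_nonneg_left (Real.le_norm_self _) zero_le_two)

/-- Loglog obstruction: if `P` is an infinite set of primes whose bounded-exponent
semigroup counting function satisfies `A_P(x) = o(log x)`, then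
`#{p ∈ P : p ≤ x} = O(log log x)`. -/
theorem SP_sublog_forces_loglog (P : Set ℕ) (hP : ∀ p ∈ P, Nat.Prime p)
    (hInf : P.Infinite)
    (h : (fun x : ℝ => ((SP P ∩ {n : ℕ | (n : ℝ) ≤ x}).ncard : ℝ))
      =o[atTop] Real.log) :
    (fun x : ℝ => ((P ∩ {p : ℕ | (p : ℝ) ≤ x}).ncard : ℝ))
      =O[atTop] fun x : ℝ => Real.log (Real.log x) :=
  SP_sublog_forces_loglog_general P hP h
end

section
/- Define A(x) = #(𝒮₃^{(≤3)} ∩ [1, x]) and, for each odd prime p, Z(p) = #{ r prime : r ∣ Φ_{4p}(2) and (r−1)/(4p) ∈ 𝒮₃^{(≤3)} }, where Φ_{4p} is the 4p-th cyclotomic polynomial. Suppose: (i) there exists C > 0 such that for every sufficiently large prime p ∈ 𝒫₃, Z(p) ≤ C · A(2^{2p}/(4p)) / p; and (ii) A(x) = o(log x) as x → ∞. Then H_even is finite. -/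
/-- `𝒮₃^{(≤3)}`: positive integers all of whose prime factors are 3-Higgs and occur with
exponent at most `3`. -/
def S3 : Set ℕ := {n | 1 ≤ n ∧ ∀ q : ℕ, q.Prime → q ∣ n → Higgs3 q ∧ n.factorization q ≤ 3}
open Filter Asymptotics

/-- The counting function `A(x) = #(𝒮₃^{(≤3)} ∩ [1, x])`. -/
noncomputable def Afun (x : ℝ) : ℝ := ((S3 ∩ {n : ℕ | (n : ℝ) ≤ x}).ncard : ℝ)

/-- `Z(p) = #{ r prime : r ∣ Φ_{4p}(2) and (r-1)/(4p) ∈ 𝒮₃^{(≤3)} }`. -/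
noncomputable def Zfun (p : ℕ) : ℕ :=
  {r : ℕ | r.Prime ∧ (r : ℤ) ∣ (Polynomial.cyclotomic (4 * p) ℤ).eval 2 ∧
    (r - 1) / (4 * p) ∈ S3}.ncard

/-!
For `m = 2u ∈ H_even`, `4 ∤ m`: a prime `r ∣ 2^(4s) + 1` has `8 ∣ r - 1`, so `2` is a square
mod `r`, which pushes this to `16 ∣ r - 1`. Hence `u` is odd. For an odd prime `q` and
`a = 2^(2q^k)` we have `Φ_{4q^(k+1)}(2) (a + 1) = a^q + 1`, and lifting the exponent shows
that `q² ∤ Φ_{4q^(k+1)}(2)`, so this number has a prime factor `r ∤ 4q`. Then `2` has order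
`4q^(k+1)` mod `r`, so if `q^(k+1) ∣ u` then `r ∣ 2^m + 1` is 3-Higgs with
`q^(k+1) ∣ r - 1`. With `k = 3` this bounds the exponents in `u` by `3`; with `k = 0` it makes
every prime `q ∣ u` 3-Higgs with `Z(q) ≥ 1`. An infinite `H_even` therefore yields arbitrarily
large 3-Higgs primes `p` with `Z(p) ≥ 1`, while (i) and (ii) give
`Z(p) ≤ C A(4^p/(4p))/p = o(log(4^p)/p) = o(1)`.
-/

open Polynomial

theorem cyclotomic_four_mul_prime_pow_succ_mul (R : Type*) [CommRing R] {q : ℕ} (hq : q.Prime)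
    (hq2 : q ≠ 2) (k : ℕ) :
    cyclotomic (4 * q ^ (k + 1)) R * (X ^ (2 * q ^ k) + 1) = X ^ (2 * q ^ (k + 1)) + 1 := by
  have hcyc4 : cyclotomic 4 R = X ^ 2 + 1 := by
    rw [show 4 = 2 * 2 from rfl, ← cyclotomic_expand_eq_cyclotomic Nat.prime_two dvd_rfl,
      cyclotomic_two]
    simp
  have hexpand (j : ℕ) :
      cyclotomic (4 * q ^ (j + 1)) R = expand R (q ^ j) (cyclotomic (4 * q) R) := by
    induction j with
    | zero => simp
    | succ j ih =>
      rw [pow_succ' q j, ← expand_expand, ← ih, cyclotomic_expand_eq_cyclotomic hq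
        (dvd_mul_of_dvd_right (dvd_pow_self q j.succ_ne_zero) 4), mul_assoc, ← pow_succ]
  have hq4 : ¬ q ∣ 4 := fun h => hq2 <| (Nat.prime_dvd_prime_iff_eq hq Nat.prime_two).mp
    (hq.dvd_of_dvd_pow (show q ∣ 2 ^ 2 from h))
  have hbase := congrArg (expand R (q ^ k)) (cyclotomic_expand_eq_cyclotomic_mul hq hq4 R)
  simp only [hcyc4, map_mul, map_add, map_pow, expand_X, map_one, ← hexpand] at hbase
  linear_combination -hbase

theorem isPrimitiveRoot_of_dvd_cyclotomic_eval {n r : ℕ} [Fact r.Prime] {a : ℤ}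
    (hd : (r : ℤ) ∣ (cyclotomic n ℤ).eval a) (hrn : ¬ r ∣ n) :
    IsPrimitiveRoot (a : ZMod r) n := by
  have : NeZero (n : ZMod r) := NeZero.of_not_dvd (ZMod r) hrn
  refine isRoot_cyclotomic_iff.mp ?_
  rw [IsRoot.def, ← map_cyclotomic_int, eval_intCast_map]
  simpa using (ZMod.intCast_zmod_eq_zero_iff_dvd _ r).mpr hd

theorem dvd_sub_one_of_dvd_cyclotomic_eval {n r : ℕ} (hr : r.Prime) {a : ℤ}
    (hd : (r : ℤ) ∣ (cyclotomic n ℤ).eval a) (hrn : ¬ r ∣ n) : n ∣ r - 1 := by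
  have : Fact r.Prime := ⟨hr⟩
  have hprim := isPrimitiveRoot_of_dvd_cyclotomic_eval hd hrn
  have hn : n ≠ 0 := by rintro rfl; exact hrn (dvd_zero r)
  exact hprim.dvd_of_pow_eq_one _ (ZMod.pow_card_sub_one_eq_one (hprim.ne_zero hn))

theorem dvd_pow_mul_add_one_of_dvd_cyclotomic_eval {k j r : ℕ} (hr : r.Prime) {a : ℤ}
    (hd : (r : ℤ) ∣ (cyclotomic (2 * k) ℤ).eval a) (hrk : ¬ r ∣ 2 * k) (hj : Odd j) :
    (r : ℤ) ∣ a ^ (k * j) + 1 := by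
  have : Fact r.Prime := ⟨hr⟩
  have hk : k ≠ 0 := by rintro rfl; exact hrk (dvd_zero r)
  have hneg : (a : ZMod r) ^ k = -1 := by
    refine IsPrimitiveRoot.eq_neg_one_of_two_right ?_
    simpa [hk] using (isPrimitiveRoot_of_dvd_cyclotomic_eval hd hrk).pow_of_dvd hk
      (dvd_mul_left k 2)
  rw [← ZMod.intCast_zmod_eq_zero_iff_dvd]
  push_cast
  rw [pow_mul, hneg, hj.neg_one_pow, neg_add_cancel]

theorem ZMod.two_pow_succ_dvd_sub_one_of_pow_two_pow_eq_neg_one {r k : ℕ} [Fact r.Prime]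
    (hr : r ≠ 2) {x : ZMod r} (hx : x ^ 2 ^ k = -1) : 2 ^ (k + 1) ∣ r - 1 := by
  have : Fact (2 < r) := ⟨lt_of_le_of_ne (Fact.out : r.Prime).two_le (Ne.symm hr)⟩
  have hord : orderOf x = 2 ^ (k + 1) := orderOf_eq_prime_pow
    (by rw [hx]; exact ZMod.neg_one_ne_one) (by rw [pow_succ, pow_mul, hx, neg_one_sq])
  have hx0 : x ≠ 0 := by
    rintro rfl
    rw [zero_pow (pow_ne_zero k two_ne_zero)] at hx
    exact one_ne_zero (neg_eq_zero.mp hx.symm)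
  exact hord ▸ ZMod.orderOf_dvd_card_sub_one hx0

theorem Nat.exists_prime_dvd_ne_of_not_sq_dvd {N q : ℕ} (hq : q.Prime) (hqN : q < N)
    (hsq : ¬ q ^ 2 ∣ N) : ∃ r, r.Prime ∧ r ∣ N ∧ r ≠ q := by
  by_contra! h
  have hN := Nat.eq_prime_pow_of_unique_prime_dvd (by omega) fun hr hrN => h _ hr hrN
  set j := N.primeFactorsList.length
  rcases Nat.lt_or_ge j 2 with hj | hj
  · have : N ≤ q := by
      rw [hN]
      exact (Nat.pow_le_pow_right hq.pos (by omega)).trans_eq (pow_one q)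
    omega
  · exact hsq (hN ▸ Nat.pow_dvd_pow q hj)

theorem Nat.Prime.dvd_add_one_of_dvd_pow_add_one {q a : ℕ} (hq : q.Prime) (h : q ∣ a ^ q + 1) :
    q ∣ a + 1 := by
  have : Fact q.Prime := ⟨hq⟩
  rw [← ZMod.natCast_eq_zero_iff] at h ⊢
  push_cast at h ⊢
  rwa [ZMod.pow_card] at h

theorem exists_prime_dvd_ne_of_mul_add_one_eq_pow_add_one {q a N : ℕ} (hq : q.Prime)
    (hq2 : q ≠ 2) (ha : 3 ≤ a) (hN : N * (a + 1) = a ^ q + 1) :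
    ∃ r, r.Prime ∧ r ∣ N ∧ r ≠ q := by
  have hq3 : 3 ≤ q := by have := hq.two_le; omega
  have ha3 : a * a * a ≤ a ^ q := (Nat.pow_le_pow_right (by omega) hq3).trans_eq' (by ring)
  by_cases hqN : q ∣ N
  · have : Fact q.Prime := ⟨hq⟩
    have hqa : q ∣ a + 1 := hq.dvd_add_one_of_dvd_pow_add_one (hN ▸ dvd_mul_of_dvd_left hqN _)
    have hN0 : N ≠ 0 := by rintro rfl; simp at hN
    have hval : padicValNat q N = 1 := by
      have hlte := padicValNat.pow_add_pow (hq.odd_of_ne_two hq2) hqa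
        (fun h => hq.one_lt.ne' (Nat.dvd_one.mp ((Nat.dvd_add_right h).mp hqa)))
        (hq.odd_of_ne_two hq2)
      rw [one_pow, ← hN, padicValNat.mul hN0 (by omega), padicValNat_self] at hlte
      omega
    refine Nat.exists_prime_dvd_ne_of_not_sq_dvd hq ?_ ?_
    · by_contra! hNq
      have hqa' : q ≤ a + 1 := Nat.le_of_dvd (by omega) hqa
      have : a ^ q + 1 ≤ (a + 1) * (a + 1) := hN ▸ Nat.mul_le_mul (hNq.trans hqa') le_rfl
      nlinarith
    · rw [padicValNat_dvd_iff_le hN0, hval]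
      omega
  · have hN1 : N ≠ 1 := by
      rintro rfl
      nlinarith
    obtain ⟨r, hr, hrN⟩ := Nat.exists_prime_and_dvd hN1
    exact ⟨r, hr, hrN, fun h => hqN (h ▸ hrN)⟩

theorem exists_prime_dvd_cyclotomic_eval_two_four_mul_prime_pow {q : ℕ} (hq : q.Prime)
    (hq2 : q ≠ 2) (k : ℕ) :
    ∃ r : ℕ, r.Prime ∧ (r : ℤ) ∣ (cyclotomic (4 * q ^ (k + 1)) ℤ).eval 2 ∧
      ¬ r ∣ 4 * q ^ (k + 1) := by
  set N := ((cyclotomic (4 * q ^ (k + 1)) ℤ).eval 2).natAbs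
  have hNΦ : (N : ℤ) = (cyclotomic (4 * q ^ (k + 1)) ℤ).eval 2 :=
    Int.natAbs_of_nonneg (cyclotomic_pos' _ one_lt_two).le
  set a := 2 ^ (2 * q ^ k)
  have hqk : 1 ≤ q ^ k := Nat.one_le_pow k q hq.pos
  have hN : N * (a + 1) = a ^ q + 1 := by
    have := congrArg (eval (2 : ℤ)) (cyclotomic_four_mul_prime_pow_succ_mul ℤ hq hq2 k)
    simp only [eval_mul, eval_add, eval_pow, eval_X, eval_one, ← hNΦ] at this
    rw [← pow_mul, mul_assoc, ← pow_succ]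
    exact_mod_cast this
  have ha : 4 ≤ a := by
    calc 4 = 2 ^ 2 := rfl
      _ ≤ a := Nat.pow_le_pow_right two_pos (by omega)
  obtain ⟨r, hr, hrN, hrq⟩ :=
    exists_prime_dvd_ne_of_mul_add_one_eq_pow_add_one hq hq2 (by omega) hN
  have hr2 : r ≠ 2 := by
    rintro rfl
    have h2a : 2 ∣ a ^ q := dvd_pow (dvd_pow_self 2 (by omega)) hq.ne_zero
    have : 2 ∣ a ^ q + 1 := hN ▸ dvd_mul_of_dvd_left hrN _
    omega
  refine ⟨r, hr, hNΦ ▸ Int.natCast_dvd_natCast.mpr hrN, fun hr4q => ?_⟩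
  rcases (Nat.Prime.dvd_mul hr).mp hr4q with h | h
  · exact hr2 ((Nat.prime_dvd_prime_iff_eq hr Nat.prime_two).mp
      (hr.dvd_of_dvd_pow (show r ∣ 2 ^ 2 from h)))
  · exact hrq ((Nat.prime_dvd_prime_iff_eq hr hq).mp (hr.dvd_of_dvd_pow h))

theorem Nat.dvd_factorial_pow_of_factorization_le {n B e : ℕ} (hn : n ≠ 0)
    (hB : ∀ p ∈ n.primeFactors, p ≤ B) (he : ∀ p, n.factorization p ≤ e) :
    n ∣ B.factorial ^ e := by
  rw [← Nat.factorization_le_iff_dvd hn (pow_ne_zero _ B.factorial_ne_zero)]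
  intro p
  rw [Nat.factorization_pow, Finsupp.smul_apply, smul_eq_mul]
  by_cases hp : p ∈ n.primeFactors
  · have hpB := Nat.dvd_factorial (Nat.prime_of_mem_primeFactors hp).pos (hB p hp)
    have := ((Nat.prime_of_mem_primeFactors hp).dvd_iff_one_le_factorization
      B.factorial_ne_zero).mp hpB
    nlinarith [he p]
  · simp [Finsupp.notMem_support_iff.mp (n.support_factorization ▸ hp)]

theorem tendsto_two_pow_two_mul_div_four_mul :
    Tendsto (fun p : ℕ => (2 : ℝ) ^ (2 * p) / (4 * p)) atTop atTop := by
  refine tendsto_atTop_mono' atTop ?_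
    ((tendsto_pow_atTop_atTop_of_one_lt one_lt_two).atTop_div_const (four_pos (α := ℝ)))
  filter_upwards [eventually_gt_atTop 0] with p hp
  have hp2 : (p : ℝ) ≤ 2 ^ p := by exact_mod_cast (Nat.lt_two_pow_self).le
  rw [div_le_div_iff₀ four_pos (by positivity), pow_mul']
  nlinarith [pow_pos (two_pos (α := ℝ)) p]

namespace Higgs3

variable {p : ℕ}

theorem prime (h : Higgs3 p) : p.Prime := by
  cases h with | mk _ hp _ _ => exact hp

theorem of_prime_dvd_sub_one (h : Higgs3 p) {q : ℕ} (hq : q.Prime) (hd : q ∣ p - 1) :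
    Higgs3 q := by
  cases h with | mk _ _ hrec _ => exact hrec q hq hd

theorem factorization_sub_one_le_s17 (h : Higgs3 p) (q : ℕ) : (p - 1).factorization q ≤ 3 := by
  by_cases hq : q.Prime ∧ q ∣ p - 1
  · cases h with | mk _ _ _ hexp => exact hexp q hq.1 hq.2
  · rw [not_and_or] at hq
    rcases hq with hq | hq
    · simp [Nat.factorization_eq_zero_of_not_prime _ hq]
    · simp [Nat.factorization_eq_zero_of_not_dvd hq]

theorem div_mem_S3 (h : Higgs3 p) {d : ℕ} (hd : d ∣ p - 1) : (p - 1) / d ∈ S3 := by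
  have hp1 : p - 1 ≠ 0 := by have := h.prime.two_le; omega
  refine ⟨Nat.div_pos (Nat.le_of_dvd (by omega) hd) (Nat.pos_of_dvd_of_pos hd (by omega)),
    fun q hq hqd => ⟨h.of_prime_dvd_sub_one hq (hqd.trans (Nat.div_dvd_of_dvd hd)), ?_⟩⟩
  rw [Nat.factorization_div hd]
  exact (Nat.sub_le _ _).trans (h.factorization_sub_one_le_s17 q)

end Higgs3

theorem not_four_dvd_of_mem_Hset {m : ℕ} (hm : m ∈ Hset) : ¬ 4 ∣ m := by
  rintro ⟨s, rfl⟩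
  obtain ⟨hs, hmH⟩ := hm
  have hodd : ¬ 2 ∣ 2 ^ (4 * s) + 1 := by
    have : 2 ∣ 2 ^ (4 * s) := dvd_pow_self 2 (by omega)
    omega
  set r := (2 ^ (4 * s) + 1).minFac
  have hr : r.Prime := Nat.minFac_prime (by have := Nat.two_pow_pos (4 * s); omega)
  have : Fact r.Prime := ⟨hr⟩
  have hrm : r ∣ 2 ^ (4 * s) + 1 := Nat.minFac_dvd _
  have hr2 : r ≠ 2 := by rintro h; exact hodd (h ▸ hrm)
  have hneg : (2 : ZMod r) ^ (4 * s) = -1 := by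
    rw [← ZMod.natCast_eq_zero_iff] at hrm
    push_cast at hrm
    exact eq_neg_of_add_eq_zero_left hrm
  have h8 : 2 ^ 3 ∣ r - 1 := ZMod.two_pow_succ_dvd_sub_one_of_pow_two_pow_eq_neg_one hr2
    (x := 2 ^ s) (by rw [← pow_mul, mul_comm]; exact hneg)
  obtain ⟨c, hc⟩ := (ZMod.exists_sq_eq_two_iff hr2).mpr
    (Or.inl (by have : 8 ∣ r - 1 := h8; have := hr.two_le; omega))
  have h16 : 2 ^ 4 ∣ r - 1 := ZMod.two_pow_succ_dvd_sub_one_of_pow_two_pow_eq_neg_one hr2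
    (x := c ^ s) (by rw [← pow_mul, show s * 2 ^ 3 = 2 * (4 * s) by ring, pow_mul, sq, ← hc,
      hneg])
  have := (Nat.prime_two.pow_dvd_iff_le_factorization (by have := hr.two_le; omega)).mp h16
  have := (hmH r hr hrm).factorization_sub_one_le_s17 2
  omega

theorem exists_odd_of_mem_Heven {m : ℕ} (hm : m ∈ Heven) : ∃ u, Odd u ∧ m = 2 * u := by
  obtain ⟨u, rfl⟩ := hm.2
  refine ⟨u, Nat.not_even_iff_odd.mp fun ⟨w, hw⟩ => ?_, rfl⟩
  exact not_four_dvd_of_mem_Hset hm.1 ⟨w, by omega⟩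

theorem higgs3_of_dvd_cyclotomic_eval_two {u k r : ℕ} (hu : Odd u) (hm : 2 * u ∈ Hset)
    (hk : k ∣ u) (hr : r.Prime) (hrk : ¬ r ∣ 4 * k)
    (hrΦ : (r : ℤ) ∣ (cyclotomic (4 * k) ℤ).eval 2) : Higgs3 r ∧ 4 * k ∣ r - 1 := by
  refine ⟨hm.2 r hr ?_, dvd_sub_one_of_dvd_cyclotomic_eval hr hrΦ hrk⟩
  obtain ⟨j, rfl⟩ := hk
  rw [show 4 * k = 2 * (2 * k) by ring] at hrΦ hrk
  have := dvd_pow_mul_add_one_of_dvd_cyclotomic_eval hr hrΦ hrk (Nat.odd_mul.mp hu).2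
  rw [← mul_assoc]
  exact_mod_cast this

theorem factorization_le_three_of_mem_Hset {u : ℕ} (hu : Odd u) (hm : 2 * u ∈ Hset) (q : ℕ) :
    u.factorization q ≤ 3 := by
  by_contra! hq3
  have hq : q.Prime := by
    by_contra h
    simp [Nat.factorization_eq_zero_of_not_prime u h] at hq3
  have hq2 : q ≠ 2 := by
    rintro rfl
    simp [Nat.factorization_eq_zero_of_not_dvd hu.not_two_dvd_nat] at hq3
  have hqu : q ^ (3 + 1) ∣ u := (hq.pow_dvd_iff_le_factorization hu.pos.ne').mpr hq3
  obtain ⟨r, hr, hrΦ, hrq⟩ := exists_prime_dvd_cyclotomic_eval_two_four_mul_prime_pow hq hq2 3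
  obtain ⟨hH, hdvd⟩ := higgs3_of_dvd_cyclotomic_eval_two hu hm hqu hr hrq hrΦ
  have := (hq.pow_dvd_iff_le_factorization (by have := hr.two_le; omega)).mp
    ((dvd_mul_left _ 4).trans hdvd)
  have := hH.factorization_sub_one_le_s17 q
  omega

theorem Zfun_pos_of_mem {p r : ℕ} (hr : r.Prime)
    (hrΦ : (r : ℤ) ∣ (cyclotomic (4 * p) ℤ).eval 2) (hS : (r - 1) / (4 * p) ∈ S3) :
    0 < Zfun p := by
  have hΦ : 0 < ((cyclotomic (4 * p) ℤ).eval 2).natAbs :=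
    Int.natAbs_pos.mpr (cyclotomic_pos' _ one_lt_two).ne'
  refine (Set.ncard_pos ((Set.finite_Iic ((cyclotomic (4 * p) ℤ).eval 2).natAbs).subset
    fun s hs => ?_)).mpr ⟨r, hr, hrΦ, hS⟩
  exact Nat.le_of_dvd hΦ (Int.natCast_dvd.mp hs.2.1)

theorem higgs3_and_Zfun_pos_of_prime_dvd {u q : ℕ} (hu : Odd u) (hm : 2 * u ∈ Hset)
    (hq : q.Prime) (hqu : q ∣ u) : Higgs3 q ∧ 0 < Zfun q := by
  have hq2 : q ≠ 2 := by rintro rfl; exact hu.not_two_dvd_nat hqu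
  obtain ⟨r, hr, hrΦ, hrq⟩ := exists_prime_dvd_cyclotomic_eval_two_four_mul_prime_pow hq hq2 0
  rw [zero_add, pow_one] at hrΦ hrq
  obtain ⟨hH, hdvd⟩ := higgs3_of_dvd_cyclotomic_eval_two hu hm hqu hr hrq hrΦ
  exact ⟨hH.of_prime_dvd_sub_one hq ((dvd_mul_left q 4).trans hdvd),
    Zfun_pos_of_mem hr hrΦ (hH.div_mem_S3 hdvd)⟩

theorem exists_higgs3_Zfun_pos_of_Heven_infinite (hinf : Heven.Infinite) (T : ℕ) :
    ∃ p, T ≤ p ∧ p.Prime ∧ Higgs3 p ∧ 0 < Zfun p := by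
  by_contra! h
  refine hinf ((Set.finite_Iic (2 * T.factorial ^ 3)).subset fun m hm => ?_)
  obtain ⟨u, hu, rfl⟩ := exists_odd_of_mem_Heven hm
  have hsmall : ∀ q ∈ u.primeFactors, q ≤ T := fun q hq => by
    by_contra! hTq
    obtain ⟨hH, hZ⟩ := higgs3_and_Zfun_pos_of_prime_dvd hu hm.1
      (Nat.prime_of_mem_primeFactors hq) (Nat.dvd_of_mem_primeFactors hq)
    exact hZ.ne' (Nat.le_zero.mp (h q hTq.le (Nat.prime_of_mem_primeFactors hq) hH))
  have := Nat.le_of_dvd (pow_pos T.factorial_pos 3) (Nat.dvd_factorial_pow_of_factorization_le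
    hu.pos.ne' hsmall (factorization_le_three_of_mem_Hset hu hm.1))
  exact Set.mem_Iic.mpr (by omega)

theorem eventually_Zfun_eq_zero {C : ℝ} (hC : 0 < C)
    (hZ : ∀ᶠ p : ℕ in atTop, p.Prime → Higgs3 p →
      (Zfun p : ℝ) ≤ C * Afun ((2 : ℝ) ^ (2 * p) / (4 * p)) / p)
    (hA : Afun =o[atTop] Real.log) :
    ∀ᶠ p : ℕ in atTop, p.Prime → Higgs3 p → Zfun p = 0 := by
  have hsmall := tendsto_two_pow_two_mul_div_four_mul.eventually
    ((hA.def (c := 1 / (4 * C)) (by positivity)).and (eventually_ge_atTop 1))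
  filter_upwards [hZ, hsmall, eventually_gt_atTop 0] with p hZp ⟨hAp, hx1⟩ hp hpp hH
  set x := (2 : ℝ) ^ (2 * p) / (4 * p)
  have hp' : (1 : ℝ) ≤ p := by exact_mod_cast hp
  have hlog : Real.log x ≤ 2 * p * Real.log 2 := by
    calc Real.log x ≤ Real.log (2 ^ (2 * p)) :=
          Real.log_le_log (by linarith) (div_le_self (by positivity) (by linarith))
      _ = 2 * p * Real.log 2 := by rw [Real.log_pow]; push_cast; ring
  have hA0 : 0 ≤ Afun x := Nat.cast_nonneg _
  rw [Real.norm_of_nonneg hA0, Real.norm_of_nonneg (Real.log_nonneg hx1)] at hAp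
  have : (Zfun p : ℝ) < 1 := by
    calc (Zfun p : ℝ) ≤ C * Afun x / p := hZp hpp hH
      _ ≤ C * (1 / (4 * C) * (2 * p * Real.log 2)) / p := by
          gcongr
          exact hAp.trans (by gcongr)
      _ = Real.log 2 / 2 := by field_simp; ring
      _ < 1 := by linarith [Real.log_two_lt_d9]
  exact Nat.lt_one_iff.mp (by exact_mod_cast this)

/-- Conditional sharpened reduction: divisor-transference for `Φ_{4p}(2)` together with
sublogarithmic semigroup growth `A(x) = o(log x)` imply that `H_even` is finite. -/
theorem conditional_sharpened_reduction
    (hi : ∃ C : ℝ, 0 < C ∧ ∀ᶠ p : ℕ in atTop, p.Prime → Higgs3 p →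
      (Zfun p : ℝ) ≤ C * Afun ((2 : ℝ) ^ (2 * p) / (4 * p)) / p)
    (hii : Afun =o[atTop] Real.log) :
    Heven.Finite := by
  obtain ⟨C, hC, hZ⟩ := hi
  obtain ⟨T, hT⟩ := eventually_atTop.mp (eventually_Zfun_eq_zero hC hZ hii)
  by_contra hinf
  obtain ⟨p, hTp, hp, hH, hpos⟩ := exists_higgs3_Zfun_pos_of_Heven_infinite hinf T
  exact hpos.ne' (hT p hTp hp hH)
end
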